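/- Let V=(Q,D,Δ,w) be a 1-VASS with disequality tests in which every state has at most one disequality guard, and let q ∈ Q_+. Then the distinct q-chains contained in a q-residue class partition that residue class, and every q-residue class is a disjoint union of at most 2|Q| bounded chains and exactly one unbounded chain. -/

import Mathlib

/-!
The residue class of `r` is an arithmetic progression `z₀ + n W_q` lying above `-pmin(γ_q)`, so
`γ_q` lifts to a run from each of its points, and iterating `γ_q` from the `i`-th to the `j`-th
point is a valid run iff `γ_q` is a valid run from every point `i ≤ k < j` in between. Hence the
chains are the blocks into which the progression is cut by its invalid points: two points lie in
the same chain iff they have the same invalid points below them. From an invalid point the run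
of `γ_q` hits the unique guard of the state at one of its `|γ_q| ≤ |Q| + 1` positions, and each
position hits its guard from at most one starting value, so there are at most `|Q| + 1 ≤ 2|Q|`
invalid points. Every bounded block is the block of an invalid point, and the block above all
invalid points is the only unbounded one.
-/

namespace VASSPaper

/-- A 1-VASS with disequality tests: states `Q`, transition relation `delta`,
integer weights `w`, and for each state a cofinite set `D q ⊆ ℕ` of allowed counter values. -/
structure OneVASS (Q : Type) where
  delta : Q → Q → Prop
  w : Q → Q → ℤ
  D : Q → Set ℕ
  cofinite : ∀ q, (D q)ᶜ.Finite

variable {Q : Type}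

/-- A path is a nonempty sequence of states joined by transitions. -/
def IsPath (V : OneVASS Q) : List Q → Prop
  | [] => False
  | [_] => True
  | a :: b :: l => V.delta a b ∧ IsPath V (b :: l)

/-- The weight of a path: the sum of the weights of its transitions. -/
def pathWeight (V : OneVASS Q) (π : List Q) : ℤ :=
  (List.zipWith V.w π π.tail).sum

/-- The counter value at position `i` of the run over `π` starting with counter `z`. -/
def counterAt (V : OneVASS Q) (z : ℕ) (π : List Q) (i : ℕ) : ℤ :=
  (z : ℤ) + pathWeight V (π.take (i + 1))

/-- `π` lifts to a run from counter value `z`: all counter values stay nonnegative. -/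
def IsRun (V : OneVASS Q) (π : List Q) (z : ℕ) : Prop :=
  IsPath V π ∧ ∀ i, i < π.length → 0 ≤ counterAt V z π i

/-- A valid run additionally respects all disequality guards. -/
def IsValidRun (V : OneVASS Q) (π : List Q) (z : ℕ) : Prop :=
  IsRun V π z ∧ ∀ i, ∀ h : i < π.length, (counterAt V z π i).toNat ∈ V.D (π.get ⟨i, h⟩)

/-- `π` goes from configuration `c` to configuration `c'`. -/
def RunFromTo (V : OneVASS Q) (π : List Q) (c c' : Q × ℕ) : Prop :=
  π.head? = some c.1 ∧ π.getLast? = some c'.1 ∧ (c'.2 : ℤ) = (c.2 : ℤ) + pathWeight V π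

/-- `c'` is reachable from `c` by a valid run. -/
def Reaches (V : OneVASS Q) (c c' : Q × ℕ) : Prop :=
  ∃ π, IsValidRun V π c.2 ∧ RunFromTo V π c c'

/-- A configuration is unbounded if infinitely many configurations are reachable from it. -/
def Unbounded (V : OneVASS Q) (c : Q × ℕ) : Prop :=
  {c' | Reaches V c c'}.Infinite

/-- `(s,0)` covers the state `t`. -/
def Covers (V : OneVASS Q) (s t : Q) : Prop :=
  ∃ z, Reaches V (s, 0) (t, z)

/-- Every state has at most one disequality guard. -/
def SingleGuard (V : OneVASS Q) : Prop :=
  ∀ q, V.D q = Set.univ ∨ ∃ g : ℕ, V.D q = {g}ᶜ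

/-- The minimum weight of a (possibly empty) prefix of `π`. -/
def pmin (V : OneVASS Q) (π : List Q) : ℤ :=
  ((List.range (π.length + 1)).map fun i => pathWeight V (π.take i)).foldr min 0

/-- The maximum weight of a (possibly empty) suffix of `π`. -/
def smax (V : OneVASS Q) (π : List Q) : ℤ :=
  ((List.range (π.length + 1)).map fun i => pathWeight V (π.drop i)).foldr max 0

/-- A cycle on `q`: a path with at least one transition starting and ending at `q`. -/
def IsCycleOn (V : OneVASS Q) (π : List Q) (q : Q) : Prop :=
  IsPath V π ∧ 2 ≤ π.length ∧ π.head? = some q ∧ π.getLast? = some q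

/-- A simple cycle on `q`. -/
def IsSimpleCycleOn (V : OneVASS Q) (π : List Q) (q : Q) : Prop :=
  IsCycleOn V π q ∧ π.dropLast.Nodup

/-- The set of states lying on a positive-weight simple cycle. -/
def Qplus (V : OneVASS Q) : Set Q :=
  {q | ∃ π, IsSimpleCycleOn V π q ∧ 0 < pathWeight V π}

/-- `γ` is a valid choice of cycles: for each `q ∈ Q₊`, `γ q` is a simple positive cycle
on `q` whose `pmin` is maximal among all positive-weight simple cycles on `q`. -/
def GammaChoice (V : OneVASS Q) (γ : Q → List Q) : Prop :=
  ∀ q ∈ Qplus V,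
    IsSimpleCycleOn V (γ q) q ∧ 0 < pathWeight V (γ q) ∧
      ∀ π, IsSimpleCycleOn V π q → 0 < pathWeight V π → pmin V π ≤ pmin V (γ q)

/-- `Conf₊`: configurations `(q,z)` with `q ∈ Q₊` and `z + pmin (γ q) ≥ 0`. -/
def ConfPlus (V : OneVASS Q) (γ : Q → List Q) : Set (Q × ℕ) :=
  {c | c.1 ∈ Qplus V ∧ 0 ≤ (c.2 : ℤ) + pmin V (γ c.1)}

/-- `W_q`, the weight of the chosen cycle `γ q`, as a natural number. -/
def Wnat (V : OneVASS Q) (γ : Q → List Q) (q : Q) : ℕ :=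
  (pathWeight V (γ q)).toNat

/-- The `q`-residue class of `r` modulo `W_q`. -/
def resClass (V : OneVASS Q) (γ : Q → List Q) (q : Q) (r : ℕ) : Set (Q × ℕ) :=
  {c | c ∈ ConfPlus V γ ∧ c.1 = q ∧ c.2 % Wnat V γ q = r}

/-- `iterCycle π k` is the cycle `π` iterated `k+1` times. -/
def iterCycle (π : List Q) : ℕ → List Q
  | 0 => π
  | k + 1 => iterCycle π k ++ π.tail

/-- Counter values `z < z'` at state `q` are connected by a valid run iterating `γ q`. -/
def chainLinked (V : OneVASS Q) (γ : Q → List Q) (q : Q) (z z' : ℕ) : Prop :=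
  ∃ k, IsValidRun V (iterCycle (γ q) k) z ∧
    (z' : ℤ) = (z : ℤ) + pathWeight V (iterCycle (γ q) k)

/-- Any two configurations of `S` are connected by iterating `γ q`. -/
def ChainCond (V : OneVASS Q) (γ : Q → List Q) (q : Q) (S : Set (Q × ℕ)) : Prop :=
  ∀ c ∈ S, ∀ c' ∈ S, c.2 < c'.2 → chainLinked V γ q c.2 c'.2

/-- A `q`-chain inside the `q`-residue class of `r`: a maximal subset whose
configurations are pairwise connected by iterating `γ q`. -/
def IsChainIn (V : OneVASS Q) (γ : Q → List Q) (q : Q) (r : ℕ) (C : Set (Q × ℕ)) : Prop :=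
  C ⊆ resClass V γ q r ∧ ChainCond V γ q C ∧
    ∀ C', C ⊆ C' → C' ⊆ resClass V γ q r → ChainCond V γ q C' → C' = C

/-- A chain (in some residue class of some state of `Q₊`). -/
def IsChain (V : OneVASS Q) (γ : Q → List Q) (C : Set (Q × ℕ)) : Prop :=
  ∃ q r, q ∈ Qplus V ∧ r < Wnat V γ q ∧ IsChainIn V γ q r C

/-- A set of configurations is bounded if its counter values are bounded. -/
def chainBounded (C : Set (Q × ℕ)) : Prop :=
  BddAbove (Prod.snd '' C)

/-- A residue class is trivial if it consists of a single unbounded chain. -/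
def TrivialClass (V : OneVASS Q) (γ : Q → List Q) (q : Q) (r : ℕ) : Prop :=
  IsChainIn V γ q r (resClass V γ q r) ∧ ¬ chainBounded (resClass V γ q r)

/-- There is a valid run of length `k` (i.e. `k` transitions) from `c` into the set `S`. -/
def RunLenTo (V : OneVASS Q) (c : Q × ℕ) (S : Set (Q × ℕ)) (k : ℕ) : Prop :=
  ∃ π c', c' ∈ S ∧ IsValidRun V π c.2 ∧ RunFromTo V π c c' ∧ π.length = k + 1

/-- Configurations of `Conf₊ \ Un` whose distance to `Un` is minimal among all
configurations of `Conf₊ \ Un`. -/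
def Uprime (V : OneVASS Q) (γ : Q → List Q) (Un : Set (Q × ℕ)) : Set (Q × ℕ) :=
  {c | c ∈ ConfPlus V γ \ Un ∧
    ∃ k, RunLenTo V c Un k ∧
      ∀ c' ∈ ConfPlus V γ \ Un, ∀ j, RunLenTo V c' Un j → k ≤ j}

/-- `S` is downward closed in every chain. -/
def dcClosed (V : OneVASS Q) (γ : Q → List Q) (S : Set (Q × ℕ)) : Prop :=
  ∀ C, IsChain V γ C → ∀ c ∈ S ∩ C, ∀ c' ∈ C, c'.2 ≤ c.2 → c' ∈ S

/-- The inductive sequence `U_n`: `U_0` is the union of the unbounded chains; `U_{n+1}` is the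
smallest superset of `U_n ∪ U'_n` that is downward closed in every chain. -/
def U (V : OneVASS Q) (γ : Q → List Q) : ℕ → Set (Q × ℕ)
  | 0 => ⋃₀ {C | IsChain V γ C ∧ ¬ chainBounded C}
  | n + 1 => ⋂₀ {S | U V γ n ∪ Uprime V γ (U V γ n) ⊆ S ∧ dcClosed V γ S}

/-- `C` is an `n`-active bounded chain in the `q`-residue class of `r`. -/
def nActiveIn (V : OneVASS Q) (γ : Q → List Q) (q : Q) (r : ℕ) (n : ℕ)
    (C : Set (Q × ℕ)) : Prop :=
  IsChainIn V γ q r C ∧ chainBounded C ∧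
    ∃ c ∈ U V γ n ∩ resClass V γ q r, ∃ c' ∈ C, c.2 ≤ c'.2

/-- `δ_n(C)` for a `q`-chain `C`: configurations outside `U_n` whose counter value lies
between two counter values of `C \ U_n`. -/
def deltaC (V : OneVASS Q) (γ : Q → List Q) (n : ℕ) (q : Q) (C : Set (Q × ℕ)) :
    Set (Q × ℕ) :=
  {c | c ∈ ConfPlus V γ ∧ c.1 = q ∧ c ∉ U V γ n ∧
    ∃ z₁ z₂, (q, z₁) ∈ C \ U V γ n ∧ (q, z₂) ∈ C \ U V γ n ∧ z₁ ≤ c.2 ∧ c.2 ≤ z₂}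

/-- `δ_n(R)` for the `q`-residue class `R` of `r`: union of `δ_n(C)` over `n`-active chains. -/
def deltaR (V : OneVASS Q) (γ : Q → List Q) (n : ℕ) (q : Q) (r : ℕ) : Set (Q × ℕ) :=
  {c | ∃ C, nActiveIn V γ q r n C ∧ c ∈ deltaC V γ n q C}

/-- A positive-weight cycle (as a list of states). -/
def IsPosCycle (V : OneVASS Q) (π : List Q) : Prop :=
  2 ≤ π.length ∧ π.head? = π.getLast? ∧ 0 < pathWeight V π

/-- A path is primitive if no proper infix of it is a positive-weight cycle. -/
def Primitive (V : OneVASS Q) (π : List Q) : Prop :=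
  ∀ i l, (π.drop i).take l ≠ π → ¬ IsPosCycle V ((π.drop i).take l)

lemma _root_.List.foldr_min_le_of_mem {α : Type*} [LinearOrder α] {l : List α} {x : α} (a : α)
    (hx : x ∈ l) : l.foldr min a ≤ x := by
  induction l with
  | nil => simp at hx
  | cons y l ih =>
    rcases List.mem_cons.mp hx with rfl | hx
    · exact min_le_left _ _
    · exact (min_le_right _ _).trans (ih hx)

lemma exists_setOf_mod_eq_eq_range {W r : ℕ} (hW : 0 < W) (hr : r < W) (m : ℤ) :
    ∃ z₀, {z : ℕ | 0 ≤ (z : ℤ) + m ∧ z % W = r} = Set.range (fun n => z₀ + n * W) := by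
  have hex : ∃ z : ℕ, 0 ≤ (z : ℤ) + m ∧ z % W = r := by
    refine ⟨r + W * m.natAbs, ?_, by rw [Nat.add_mul_mod_self_left, Nat.mod_eq_of_lt hr]⟩
    have : |m| ≤ W * |m| := le_mul_of_one_le_left (abs_nonneg m) (by exact_mod_cast hW)
    push_cast
    linarith [neg_abs_le m]
  obtain ⟨hz₀, hz₀r⟩ := Nat.find_spec hex
  refine ⟨Nat.find hex, Set.ext fun z => ⟨fun hz => ?_, ?_⟩⟩
  · have hle := Nat.find_min' hex hz
    obtain ⟨n, hn⟩ := (Nat.modEq_iff_dvd' hle).mp (hz₀r.trans hz.2.symm)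
    exact ⟨n, by dsimp only; rw [mul_comm] at hn; omega⟩
  · rintro ⟨n, rfl⟩
    dsimp only
    refine ⟨?_, by rw [Nat.add_mul_mod_self_right, hz₀r]⟩
    have : (0 : ℤ) ≤ n * W := by positivity
    push_cast
    omega

lemma maximal_forall_eq_iff {α γ : Type*} [Nonempty α] (f : α → γ) {S : Set α} :
    Maximal (fun S : Set α => ∀ x ∈ S, ∀ y ∈ S, f x = f y) S ↔ ∃ x, S = f ⁻¹' {f x} := by
  have fiber (x : α) : ∀ y ∈ f ⁻¹' {f x}, ∀ y' ∈ f ⁻¹' {f x}, f y = f y' :=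
    fun _ hy _ hy' => hy.trans hy'.symm
  constructor
  · intro hS
    obtain ⟨x, hx⟩ : S.Nonempty := by
      rw [Set.nonempty_iff_ne_empty]
      rintro rfl
      obtain ⟨a⟩ := ‹Nonempty α›
      simpa using (hS.eq_of_le (fiber a) (Set.empty_subset _)).ge (Set.mem_preimage.mpr rfl)
    exact ⟨x, hS.eq_of_le (fiber x) fun y hy => hS.1 y hy x hx⟩
  · rintro ⟨x, rfl⟩
    exact ⟨fiber x, fun T hT hle y hy => hT y hy x (hle (Set.mem_preimage.mpr rfl))⟩

lemma _root_.Function.Injective.existsUnique_mem_image_iff {α β : Type*} {f : α → β}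
    (hf : Function.Injective f) {S : Set α} : (∃! y, y ∈ f '' S) ↔ ∃! x, x ∈ S := by
  constructor
  · rintro ⟨_, ⟨x, hx, rfl⟩, huniq⟩
    exact ⟨x, hx, fun x' hx' => hf (huniq _ ⟨x', hx', rfl⟩)⟩
  · rintro ⟨x, hx, huniq⟩
    exact ⟨f x, ⟨x, hx, rfl⟩, by rintro _ ⟨x', hx', rfl⟩; rw [huniq x' hx']⟩

section Blocks

variable (B : Set ℕ)

def Unseparated (T : Set ℕ) : Prop :=
  ∀ i ∈ T, ∀ j ∈ T, i < j → ∀ k, i ≤ k → k < j → k ∉ B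

def block (n : ℕ) : Set ℕ := {m | B ∩ Set.Iio m = B ∩ Set.Iio n}

variable {B}

lemma inter_Iio_eq_inter_Iio_iff {i j : ℕ} (hij : i ≤ j) :
    B ∩ Set.Iio i = B ∩ Set.Iio j ↔ ∀ k, i ≤ k → k < j → k ∉ B := by
  constructor
  · intro h k hik hkj hk
    have : k ∈ B ∩ Set.Iio i := h ▸ ⟨hk, hkj⟩
    exact absurd this.2 (not_lt.mpr hik)
  · intro h
    ext k
    simp only [Set.mem_inter_iff, Set.mem_Iio]
    refine ⟨fun ⟨hk, hki⟩ => ⟨hk, by omega⟩, fun ⟨hk, hkj⟩ => ⟨hk, ?_⟩⟩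
    by_contra hki
    exact h k (by omega) hkj hk

lemma unseparated_iff {T : Set ℕ} :
    Unseparated B T ↔ ∀ i ∈ T, ∀ j ∈ T, B ∩ Set.Iio i = B ∩ Set.Iio j := by
  constructor
  · intro h i hi j hj
    rcases lt_trichotomy i j with hij | rfl | hij
    · exact (inter_Iio_eq_inter_Iio_iff hij.le).mpr (h i hi j hj hij)
    · rfl
    · exact ((inter_Iio_eq_inter_Iio_iff hij.le).mpr (h j hj i hi hij)).symm
  · intro h i hi j hj hij
    exact (inter_Iio_eq_inter_Iio_iff hij.le).mp (h i hi j hj)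

lemma maximal_unseparated_iff {T : Set ℕ} : Maximal (Unseparated B) T ↔ ∃ n, T = block B n := by
  have : Unseparated B = fun T => ∀ i ∈ T, ∀ j ∈ T, B ∩ Set.Iio i = B ∩ Set.Iio j :=
    funext fun _ => propext unseparated_iff
  rw [this]
  exact maximal_forall_eq_iff fun m => B ∩ Set.Iio m

lemma mem_block_self (n : ℕ) : n ∈ block B n := rfl

lemma block_eq_of_mem {m n : ℕ} (h : m ∈ block B n) : block B m = block B n := by
  have h' : B ∩ Set.Iio m = B ∩ Set.Iio n := h
  simp only [block, h']

lemma existsUnique_maximal_unseparated_mem (n : ℕ) :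
    ∃! T, Maximal (Unseparated B) T ∧ n ∈ T := by
  refine ⟨block B n, ⟨maximal_unseparated_iff.mpr ⟨n, rfl⟩, mem_block_self n⟩, ?_⟩
  rintro T ⟨hT, hn⟩
  obtain ⟨m, rfl⟩ := maximal_unseparated_iff.mp hT
  exact (block_eq_of_mem hn).symm

lemma bddAbove_block_iff {n : ℕ} : BddAbove (block B n) ↔ ∃ b ∈ B, n ≤ b := by
  constructor
  · rintro ⟨M, hM⟩
    by_contra! hB
    have hmem : n + M + 1 ∈ block B n := by
      show B ∩ Set.Iio (n + M + 1) = B ∩ Set.Iio n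
      rw [Set.inter_eq_left.mpr fun b hb => Set.mem_Iio.mpr (by have := hB b hb; omega),
        Set.inter_eq_left.mpr fun b hb => Set.mem_Iio.mpr (hB b hb)]
    have := hM hmem
    omega
  · rintro ⟨b, hb, hnb⟩
    refine ⟨b, fun m (hm : B ∩ Set.Iio m = B ∩ Set.Iio n) => ?_⟩
    by_contra! hbm
    have : b ∈ B ∩ Set.Iio n := hm ▸ ⟨hb, hbm⟩
    exact absurd this.2 (not_lt.mpr hnb)

lemma exists_mem_block_eq {n b : ℕ} (hb : b ∈ B) (hnb : n ≤ b) :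
    ∃ b' ∈ B, block B b' = block B n := by
  classical
  have hex : ∃ b, b ∈ B ∧ n ≤ b := ⟨b, hb, hnb⟩
  obtain ⟨hb', hnb'⟩ := Nat.find_spec hex
  refine ⟨Nat.find hex, hb', block_eq_of_mem ?_⟩
  exact ((inter_Iio_eq_inter_Iio_iff hnb').mpr
    fun k hnk hk hkB => Nat.find_min hex hk ⟨hkB, hnk⟩).symm

lemma setOf_maximal_unseparated_bddAbove_subset :
    {T | Maximal (Unseparated B) T ∧ BddAbove T} ⊆ block B '' B := by
  rintro T ⟨hT, hbdd⟩
  obtain ⟨n, rfl⟩ := maximal_unseparated_iff.mp hT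
  obtain ⟨b, hb, hnb⟩ := bddAbove_block_iff.mp hbdd
  exact exists_mem_block_eq hb hnb

lemma existsUnique_maximal_unseparated_not_bddAbove (hB : B.Finite) :
    ∃! T, Maximal (Unseparated B) T ∧ ¬ BddAbove T := by
  obtain ⟨M, hM⟩ := hB.bddAbove
  have hbelow {n : ℕ} (hn : ¬ ∃ b ∈ B, n ≤ b) : B ∩ Set.Iio n = B :=
    Set.inter_eq_left.mpr fun b hb => Set.mem_Iio.mpr (not_le.mp fun h => hn ⟨b, hb, h⟩)
  have htop : ¬ ∃ b ∈ B, M + 1 ≤ b := fun ⟨b, hb, hMb⟩ => by have := hM hb; omega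
  refine ⟨block B (M + 1), ⟨maximal_unseparated_iff.mpr ⟨_, rfl⟩, ?_⟩, ?_⟩
  · rwa [bddAbove_block_iff]
  · rintro T ⟨hT, hunb⟩
    obtain ⟨n, rfl⟩ := maximal_unseparated_iff.mp hT
    rw [bddAbove_block_iff] at hunb
    exact block_eq_of_mem ((hbelow hunb).trans (hbelow htop).symm)

end Blocks

section Runs

variable (V : OneVASS Q)

@[simp] lemma pathWeight_singleton (a : Q) : pathWeight V [a] = 0 := rfl

@[simp] lemma pathWeight_cons_cons (a b : Q) (l : List Q) :
    pathWeight V (a :: b :: l) = V.w a b + pathWeight V (b :: l) := by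
  simp [pathWeight]

lemma pathWeight_append_cons (A B : List Q) (s : Q) :
    pathWeight V (A ++ s :: B) = pathWeight V (A ++ [s]) + pathWeight V (s :: B) := by
  induction A with
  | nil => simp
  | cons a A ih =>
    cases A with
    | nil => simp
    | cons b A =>
      simp only [List.cons_append, pathWeight_cons_cons] at ih ⊢
      rw [ih, add_assoc]

@[simp] lemma counterAt_cons_zero (z : ℕ) (a : Q) (l : List Q) :
    counterAt V z (a :: l) 0 = z := by
  simp [counterAt]

lemma counterAt_cons_cons_succ (z : ℕ) (a b : Q) (l : List Q) (i : ℕ) :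
    counterAt V z (a :: b :: l) (i + 1) =
      z + V.w a b + pathWeight V ((b :: l).take (i + 1)) := by
  simp [counterAt, add_assoc]

variable {V}

lemma IsValidRun.mem_D_head {a : Q} {l : List Q} {z : ℕ} (h : IsValidRun V (a :: l) z) :
    z ∈ V.D a := by
  simpa using h.2 0 (by simp)

lemma isValidRun_singleton {a : Q} {z : ℕ} : IsValidRun V [a] z ↔ z ∈ V.D a := by
  refine ⟨IsValidRun.mem_D_head, fun h => ⟨⟨trivial, fun i hi => ?_⟩, fun i hi => ?_⟩⟩ <;>
    obtain rfl : i = 0 := by simpa using hi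
  · simp
  · simpa using h

lemma isValidRun_cons_cons {a b : Q} {l : List Q} {z : ℕ} :
    IsValidRun V (a :: b :: l) z ↔ V.delta a b ∧ z ∈ V.D a ∧ 0 ≤ (z : ℤ) + V.w a b ∧
      IsValidRun V (b :: l) ((z : ℤ) + V.w a b).toNat := by
  have shift : ∀ i, 0 ≤ (z : ℤ) + V.w a b →
      counterAt V ((z : ℤ) + V.w a b).toNat (b :: l) i =
        counterAt V z (a :: b :: l) (i + 1) := by
    intro i h
    rw [counterAt_cons_cons_succ, counterAt, Int.toNat_of_nonneg h]
  constructor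
  · rintro ⟨⟨⟨hab, hpath⟩, hnn⟩, hD⟩
    have hnn1 : 0 ≤ (z : ℤ) + V.w a b := by
      simpa [counterAt_cons_cons_succ] using hnn 1 (by simp)
    refine ⟨hab, by simpa using hD 0 (by simp), hnn1,
      ⟨⟨hpath, fun i hi => ?_⟩, fun i hi => ?_⟩⟩
    · rw [shift i hnn1]; exact hnn (i + 1) (by simpa using hi)
    · rw [shift i hnn1]; simpa using hD (i + 1) (by simpa using hi)
  · rintro ⟨hab, ha, hnn1, ⟨⟨hpath, hnn⟩, hD⟩⟩
    refine ⟨⟨⟨hab, hpath⟩, fun i hi => ?_⟩, fun i hi => ?_⟩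
    · cases i with
      | zero => simp
      | succ i => rw [← shift i hnn1]; exact hnn i (by simpa using hi)
    · cases i with
      | zero => simpa using ha
      | succ i => rw [← shift i hnn1]; simpa using hD i (by simpa using hi)

lemma isValidRun_append_cons {A B : List Q} {s : Q} {z : ℕ} :
    IsValidRun V (A ++ s :: B) z ↔ IsValidRun V (A ++ [s]) z ∧
      IsValidRun V (s :: B) ((z : ℤ) + pathWeight V (A ++ [s])).toNat := by
  induction A generalizing z with
  | nil => simpa using fun h => isValidRun_singleton.mpr h.mem_D_head
  | cons a A ih =>
    cases A with
    | nil =>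
      simp only [List.cons_append, List.nil_append, isValidRun_cons_cons, isValidRun_singleton,
        pathWeight_cons_cons, pathWeight_singleton, add_zero]
      exact ⟨fun ⟨h1, h2, h3, h4⟩ => ⟨⟨h1, h2, h3, h4.mem_D_head⟩, h4⟩,
        fun ⟨⟨h1, h2, h3, _⟩, h4⟩ => ⟨h1, h2, h3, h4⟩⟩
    | cons b A =>
      simp only [List.cons_append, isValidRun_cons_cons, pathWeight_cons_cons] at ih ⊢
      rw [ih]
      constructor
      · rintro ⟨h1, h2, h3, h4, h5⟩
        rw [Int.toNat_of_nonneg h3, add_assoc] at h5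
        exact ⟨⟨h1, h2, h3, h4⟩, h5⟩
      · rintro ⟨⟨h1, h2, h3, h4⟩, h5⟩
        refine ⟨h1, h2, h3, h4, ?_⟩
        rwa [Int.toNat_of_nonneg h3, add_assoc]

end Runs

section Cycles

variable {V : OneVASS Q} {q : Q} {t : List Q}

lemma exists_iterCycle_eq_append_singleton (hlast : (q :: t).getLast? = some q) (k : ℕ) :
    ∃ A, iterCycle (q :: t) k = A ++ [q] := by
  obtain ⟨A₀, hA₀⟩ := List.getLast?_eq_some_iff.mp hlast
  induction k with
  | zero => exact ⟨A₀, hA₀⟩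
  | succ k ih =>
    obtain ⟨A, hA⟩ := ih
    refine ⟨A ++ A₀, ?_⟩
    rw [iterCycle, hA, List.tail_cons, List.append_assoc, List.singleton_append, hA₀,
      List.append_assoc]

lemma iterCycle_succ_eq_append_cons {k : ℕ} {A : List Q}
    (hA : iterCycle (q :: t) k = A ++ [q]) :
    iterCycle (q :: t) (k + 1) = A ++ q :: t := by
  simp [iterCycle, hA]

lemma pathWeight_iterCycle (hlast : (q :: t).getLast? = some q) (k : ℕ) :
    pathWeight V (iterCycle (q :: t) k) = (k + 1) * pathWeight V (q :: t) := by
  induction k with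
  | zero => simp [iterCycle]
  | succ k ih =>
    obtain ⟨A, hA⟩ := exists_iterCycle_eq_append_singleton hlast k
    rw [iterCycle_succ_eq_append_cons hA, pathWeight_append_cons, ← hA, ih]
    push_cast
    ring

lemma isValidRun_iterCycle (hlast : (q :: t).getLast? = some q) {W : ℕ}
    (hW : (W : ℤ) = pathWeight V (q :: t)) (k z : ℕ) :
    IsValidRun V (iterCycle (q :: t) k) z ↔ ∀ j ≤ k, IsValidRun V (q :: t) (z + j * W) := by
  induction k with
  | zero => simp [iterCycle]
  | succ k ih =>
    obtain ⟨A, hA⟩ := exists_iterCycle_eq_append_singleton hlast k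
    have hend : ((z : ℤ) + pathWeight V (iterCycle (q :: t) k)).toNat = z + (k + 1) * W := by
      rw [pathWeight_iterCycle hlast, ← hW]
      norm_cast
    rw [iterCycle_succ_eq_append_cons hA, isValidRun_append_cons, ← hA, ih, hend]
    exact ⟨fun ⟨h, h'⟩ j hj => (Nat.le_succ_iff.mp hj).elim (h j) (fun e => e ▸ h'),
      fun h => ⟨fun j hj => h j (by omega), h _ le_rfl⟩⟩

lemma Wnat_pos {γ : Q → List Q} (hpos : 0 < pathWeight V (γ q)) : 0 < Wnat V γ q :=
  Int.lt_toNat.mpr hpos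

lemma chainLinked_iff {γ : Q → List Q} (hhead : (γ q).head? = some q)
    (hlast : (γ q).getLast? = some q) (hpos : 0 < pathWeight V (γ q)) {z i j : ℕ}
    (hij : i < j) :
    chainLinked V γ q (z + i * Wnat V γ q) (z + j * Wnat V γ q) ↔
      ∀ k, i ≤ k → k < j → IsValidRun V (γ q) (z + k * Wnat V γ q) := by
  obtain ⟨t, ht⟩ := List.head?_eq_some_iff.mp hhead
  set W := Wnat V γ q
  have hW : (W : ℤ) = pathWeight V (q :: t) := by
    rw [← ht]; exact Int.toNat_of_nonneg hpos.le
  rw [ht] at hlast ⊢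
  simp only [chainLinked, ht, isValidRun_iterCycle hlast hW, pathWeight_iterCycle hlast, ← hW]
  obtain ⟨d, rfl⟩ : ∃ d, j = i + d + 1 := ⟨j - i - 1, by omega⟩
  constructor
  · rintro ⟨k, hvalid, hj⟩ l hil hlj
    have hkd : k = d := by
      have h : (i + d + 1) * W = (i + k + 1) * W := by push_cast at hj ⊢; linarith
      have := Nat.eq_of_mul_eq_mul_right (Wnat_pos hpos) h
      omega
    obtain ⟨e, rfl⟩ : ∃ e, l = i + e := ⟨l - i, by omega⟩
    simpa [add_mul, add_assoc] using hvalid e (by omega)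
  · intro h
    refine ⟨d, fun l hl => ?_, by push_cast; ring⟩
    simpa [add_mul, add_assoc] using h (i + l) (by omega) (by omega)

end Cycles

section Guards

variable {V : OneVASS Q}

lemma pmin_le_pathWeight_take (π : List Q) (i : ℕ) : pmin V π ≤ pathWeight V (π.take i) := by
  have key : ∀ i ≤ π.length, pmin V π ≤ pathWeight V (π.take i) := fun i hi =>
    List.foldr_min_le_of_mem 0 (List.mem_map.mpr ⟨i, List.mem_range.mpr (by omega), rfl⟩)
  rcases le_or_gt i π.length with h | h
  · exact key i h
  · simpa [List.take_of_length_le h.le] using key π.length le_rfl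

lemma isRun_of_nonneg_add_pmin {π : List Q} {z : ℕ} (hπ : IsPath V π)
    (hz : 0 ≤ (z : ℤ) + pmin V π) : IsRun V π z :=
  ⟨hπ, fun i _ => by
    have := pmin_le_pathWeight_take (V := V) π (i + 1)
    rw [counterAt]
    omega⟩

lemma setOf_isRun_not_isValidRun_subset (π : List Q) :
    {z | IsRun V π z ∧ ¬ IsValidRun V π z} ⊆
      ⋃ i : Fin π.length,
        (fun g : ℕ => ((g : ℤ) - pathWeight V (π.take (i + 1))).toNat) '' (V.D (π.get i))ᶜ := by
  rintro z ⟨hrun, hinvalid⟩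
  obtain ⟨i, hi, hguard⟩ : ∃ i, ∃ hi : i < π.length,
      (counterAt V z π i).toNat ∉ V.D (π.get ⟨i, hi⟩) := by
    by_contra! h
    exact hinvalid ⟨hrun, h⟩
  have hnn := hrun.2 i hi
  rw [counterAt] at hnn hguard
  simp only [Set.mem_iUnion, Set.mem_image]
  exact ⟨⟨i, hi⟩, _, hguard, by simp only; omega⟩

lemma finite_setOf_isRun_not_isValidRun (π : List Q) :
    {z | IsRun V π z ∧ ¬ IsValidRun V π z}.Finite :=
  (Set.finite_iUnion fun _ => (V.cofinite _).image _).subset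
    (setOf_isRun_not_isValidRun_subset π)

lemma ncard_compl_D_le_one (hD : SingleGuard V) (p : Q) : (V.D p)ᶜ.ncard ≤ 1 := by
  rcases hD p with h | ⟨g, h⟩ <;> simp [h]

lemma ncard_setOf_isRun_not_isValidRun_le (hD : SingleGuard V) (π : List Q) :
    {z | IsRun V π z ∧ ¬ IsValidRun V π z}.ncard ≤ π.length :=
  ((Set.ncard_le_ncard (setOf_isRun_not_isValidRun_subset π)
      (Set.finite_iUnion fun _ => (V.cofinite _).image _)).trans
    (Set.ncard_iUnion_le_of_fintype _)).trans <|
  (Finset.sum_le_sum fun _ _ =>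
    (Set.ncard_image_le (V.cofinite _)).trans (ncard_compl_D_le_one hD _)).trans_eq (by simp)

lemma IsSimpleCycleOn.length_le [Fintype Q] {π : List Q} {q : Q}
    (h : IsSimpleCycleOn V π q) : π.length ≤ Fintype.card Q + 1 := by
  have := h.2.length_le_card
  rw [List.length_dropLast] at this
  omega

end Guards

section ResidueClasses

variable {V : OneVASS Q} {γ : Q → List Q} {q : Q} {r z₀ : ℕ}

def nthConf (V : OneVASS Q) (γ : Q → List Q) (q : Q) (z₀ n : ℕ) : Q × ℕ :=
  (q, z₀ + n * Wnat V γ q)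

def invalidIndices (V : OneVASS Q) (γ : Q → List Q) (q : Q) (z₀ : ℕ) : Set ℕ :=
  {k | ¬ IsValidRun V (γ q) (z₀ + k * Wnat V γ q)}

lemma isChainIn_iff_maximal {C : Set (Q × ℕ)} :
    IsChainIn V γ q r C ↔ Maximal (fun C => C ⊆ resClass V γ q r ∧ ChainCond V γ q C) C :=
  ⟨fun ⟨hsub, hcc, hmax⟩ => ⟨⟨hsub, hcc⟩, fun C' hC' hle => (hmax C' hle hC'.1 hC'.2).le⟩,
    fun h => ⟨h.1.1, h.1.2, fun _ hle hsub hcc => (h.eq_of_le ⟨hsub, hcc⟩ hle).symm⟩⟩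

lemma add_mul_Wnat_injective (hpos : 0 < pathWeight V (γ q)) (z₀ : ℕ) :
    Function.Injective fun n => z₀ + n * Wnat V γ q :=
  fun _ _ h => Nat.eq_of_mul_eq_mul_right (Wnat_pos hpos) (Nat.add_left_cancel h)

lemma nthConf_injective (hpos : 0 < pathWeight V (γ q)) (z₀ : ℕ) :
    Function.Injective (nthConf V γ q z₀) :=
  fun _ _ h => add_mul_Wnat_injective hpos z₀ (Prod.mk.inj h).2

lemma resClass_eq_range (hq : q ∈ Qplus V) (hpos : 0 < pathWeight V (γ q))
    (hr : r < Wnat V γ q) : ∃ z₀, resClass V γ q r = Set.range (nthConf V γ q z₀) := by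
  obtain ⟨z₀, hz₀⟩ := exists_setOf_mod_eq_eq_range (Wnat_pos hpos) hr (pmin V (γ q))
  refine ⟨z₀, Set.ext fun ⟨p, z⟩ => ⟨?_, ?_⟩⟩
  · rintro ⟨⟨-, hz⟩, hp, hzr⟩
    simp only at hp hz hzr
    rw [hp] at hz
    have : z ∈ {z : ℕ | 0 ≤ (z : ℤ) + pmin V (γ q) ∧ z % Wnat V γ q = r} := ⟨hz, hzr⟩
    rw [hz₀] at this
    obtain ⟨n, hn⟩ := this
    exact ⟨n, by simp [nthConf, hn, hp]⟩
  · rintro ⟨n, hn⟩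
    obtain ⟨rfl, rfl⟩ := Prod.mk.inj hn
    have : z₀ + n * Wnat V γ q ∈ Set.range fun n => z₀ + n * Wnat V γ q := ⟨n, rfl⟩
    rw [← hz₀] at this
    exact ⟨⟨hq, this.1⟩, rfl, this.2⟩

lemma chainCond_image_nthConf_iff (hcycle : IsCycleOn V (γ q) q)
    (hpos : 0 < pathWeight V (γ q)) (T : Set ℕ) :
    ChainCond V γ q (nthConf V γ q z₀ '' T) ↔ Unseparated (invalidIndices V γ q z₀) T := by
  simp only [ChainCond, Set.forall_mem_image, nthConf, Unseparated, invalidIndices,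
    Set.mem_ofPred_eq, not_not]
  refine forall₂_congr fun i _ => forall₂_congr fun j _ => ?_
  rw [add_lt_add_iff_left, Nat.mul_lt_mul_right (Wnat_pos hpos)]
  exact imp_congr_right fun hij => chainLinked_iff hcycle.2.2.1 hcycle.2.2.2 hpos hij

lemma chainBounded_image_nthConf_iff (hpos : 0 < pathWeight V (γ q)) (T : Set ℕ) :
    chainBounded (nthConf V γ q z₀ '' T) ↔ BddAbove T := by
  rw [chainBounded, Set.image_image]
  constructor
  · rintro ⟨M, hM⟩
    refine ⟨M, fun n hn => ?_⟩
    have := hM ⟨n, hn, rfl⟩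
    have := Nat.le_mul_of_pos_right n (Wnat_pos hpos)
    simp only [nthConf] at *
    omega
  · rintro ⟨M, hM⟩
    refine ⟨z₀ + M * Wnat V γ q, ?_⟩
    rintro _ ⟨n, hn, rfl⟩
    have := Nat.mul_le_mul_right (Wnat V γ q) (hM hn)
    show z₀ + n * Wnat V γ q ≤ _
    omega

lemma setOf_isChainIn_and_eq_image (hcycle : IsCycleOn V (γ q) q)
    (hpos : 0 < pathWeight V (γ q)) (hres : resClass V γ q r = Set.range (nthConf V γ q z₀))
    {P : Set (Q × ℕ) → Prop} {P' : Set ℕ → Prop} (hP : ∀ T, P (nthConf V γ q z₀ '' T) ↔ P' T) :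
    {C | IsChainIn V γ q r C ∧ P C} = Set.image (nthConf V γ q z₀) ''
      {T | Maximal (Unseparated (invalidIndices V γ q z₀)) T ∧ P' T} := by
  have hpred : (fun C => C ⊆ resClass V γ q r ∧ ChainCond V γ q C) =
      fun C => ∃ T, Unseparated (invalidIndices V γ q z₀) T ∧ nthConf V γ q z₀ '' T = C := by
    funext C
    rw [hres, Set.subset_range_iff_exists_image_eq]
    apply propext
    constructor
    · rintro ⟨⟨T, rfl⟩, hcc⟩
      exact ⟨T, (chainCond_image_nthConf_iff hcycle hpos T).mp hcc, rfl⟩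
    · rintro ⟨T, hT, rfl⟩
      exact ⟨⟨T, rfl⟩, (chainCond_image_nthConf_iff hcycle hpos T).mpr hT⟩
  have hchain : ∀ C, IsChainIn V γ q r C ↔ C ∈ Set.image (nthConf V γ q z₀) ''
      {T | Maximal (Unseparated (invalidIndices V γ q z₀)) T} := by
    intro C
    rw [image_monotone_setOfPred_maximal fun S T _ _ =>
      Set.image_subset_image_iff (nthConf_injective hpos z₀), isChainIn_iff_maximal, hpred]
    rfl
  ext C
  simp only [Set.mem_ofPred_eq, hchain, Set.mem_image]
  constructor
  · rintro ⟨⟨T, hT, rfl⟩, hPC⟩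
    exact ⟨T, ⟨hT, (hP T).mp hPC⟩, rfl⟩
  · rintro ⟨T, ⟨hT, hP'T⟩, rfl⟩
    exact ⟨⟨T, hT, rfl⟩, (hP T).mpr hP'T⟩

lemma mapsTo_invalidIndices (hpath : IsPath V (γ q))
    (hres : resClass V γ q r = Set.range (nthConf V γ q z₀)) :
    Set.MapsTo (fun k => z₀ + k * Wnat V γ q) (invalidIndices V γ q z₀)
      {z | IsRun V (γ q) z ∧ ¬ IsValidRun V (γ q) z} := fun k hk => by
  have : nthConf V γ q z₀ k ∈ resClass V γ q r := hres ▸ ⟨k, rfl⟩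
  exact ⟨isRun_of_nonneg_add_pmin hpath this.1.2, hk⟩

lemma finite_invalidIndices (hpath : IsPath V (γ q)) (hpos : 0 < pathWeight V (γ q))
    (hres : resClass V γ q r = Set.range (nthConf V γ q z₀)) :
    (invalidIndices V γ q z₀).Finite :=
  ((finite_setOf_isRun_not_isValidRun _).preimage (add_mul_Wnat_injective hpos z₀).injOn).subset
    (mapsTo_invalidIndices hpath hres)

lemma ncard_invalidIndices_le [Fintype Q] (hD : SingleGuard V) (hsimple : IsSimpleCycleOn V (γ q) q)
    (hpos : 0 < pathWeight V (γ q)) (hres : resClass V γ q r = Set.range (nthConf V γ q z₀)) :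
    (invalidIndices V γ q z₀).ncard ≤ 2 * Fintype.card Q := by
  have hlen : (invalidIndices V γ q z₀).ncard ≤ (γ q).length :=
    (Set.ncard_le_ncard_of_injOn _ (mapsTo_invalidIndices hsimple.1.1 hres)
      (add_mul_Wnat_injective hpos z₀).injOn (finite_setOf_isRun_not_isValidRun _)).trans
      (ncard_setOf_isRun_not_isValidRun_le hD _)
  have := hsimple.length_le
  have : 0 < Fintype.card Q := Fintype.card_pos_iff.mpr ⟨q⟩
  omega

end ResidueClasses

/-- chains partition each residue class, which decomposes into at most `2|Q|`
bounded chains and exactly one unbounded chain. -/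
theorem chains_partition_residue_class
    {Q : Type} [Fintype Q] (V : OneVASS Q) (hD : SingleGuard V)
    (γ : Q → List Q) (hγ : GammaChoice V γ)
    (q : Q) (hq : q ∈ Qplus V) (r : ℕ) (hr : r < Wnat V γ q) :
    (∀ c ∈ resClass V γ q r, ∃! C, IsChainIn V γ q r C ∧ c ∈ C) ∧
    {C | IsChainIn V γ q r C ∧ chainBounded C}.Finite ∧
    {C | IsChainIn V γ q r C ∧ chainBounded C}.ncard ≤ 2 * Fintype.card Q ∧
    (∃! C, IsChainIn V γ q r C ∧ ¬ chainBounded C) := by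
  obtain ⟨hsimple, hpos, -⟩ := hγ q hq
  obtain ⟨z₀, hres⟩ := resClass_eq_range hq hpos hr
  have hinj := nthConf_injective hpos z₀
  have hinj' := Set.image_injective.mpr hinj
  have hfin := finite_invalidIndices hsimple.1.1 hpos hres
  have hbdd := setOf_isChainIn_and_eq_image hsimple.1 hpos hres
    (chainBounded_image_nthConf_iff hpos)
  refine ⟨fun c hc => ?_, ?_, ?_, ?_⟩
  · obtain ⟨n, rfl⟩ : c ∈ Set.range (nthConf V γ q z₀) := hres ▸ hc
    have : ∃! T, T ∈ {T | Maximal (Unseparated (invalidIndices V γ q z₀)) T ∧ n ∈ T} :=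
      existsUnique_maximal_unseparated_mem n
    rwa [← hinj'.existsUnique_mem_image_iff, ← setOf_isChainIn_and_eq_image hsimple.1 hpos hres
      (P := (nthConf V γ q z₀ n ∈ ·)) fun T => hinj.mem_set_image] at this
  · rw [hbdd]
    exact ((hfin.image _).subset setOf_maximal_unseparated_bddAbove_subset).image _
  · rw [hbdd, Set.ncard_image_of_injective _ hinj']
    exact (Set.ncard_le_ncard setOf_maximal_unseparated_bddAbove_subset (hfin.image _)).trans
      ((Set.ncard_image_le hfin).trans (ncard_invalidIndices_le hD hsimple hpos hres))
  · have : ∃! T, T ∈ {T | Maximal (Unseparated (invalidIndices V γ q z₀)) T ∧ ¬ BddAbove T} :=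
      existsUnique_maximal_unseparated_not_bddAbove hfin
    rwa [← hinj'.existsUnique_mem_image_iff,
      ← setOf_isChainIn_and_eq_image hsimple.1 hpos hres (P := (¬ chainBounded ·))
        fun T => (chainBounded_image_nthConf_iff hpos T).not] at this

end VASSPaper
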